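/- For every c, k ∈ ℕ and every tree T, if a (possibly infinite) graph G is c-quasi-isometric to a graph H that has a T-decomposition of width at most k, then G has a (k+1, 3c²)-centred T-decomposition (i.e. a tree-decomposition over the same tree T each of whose bags is (k+1, 3c²)-centred). -/

import Mathlib

open SimpleGraph
open scoped ENNReal NNReal

/-- `φ` is a `q`-quasi-isometry from `G` to `H`:
`q⁻¹ · dist_G(u,v) − q ≤ dist_H(φ u, φ v) ≤ q · dist_G(u,v) + q` (distances taken in `ℝ≥0∞`,
where unreachable pairs have distance `∞`), and every vertex of `H` is within distance `q`
of the image of `φ`. -/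
def IsQuasiIsometry {V W : Type} (q : ℕ) (G : SimpleGraph V) (H : SimpleGraph W)
    (φ : V → W) : Prop :=
  (∀ u v : V, (G.edist u v : ℝ≥0∞) / q - q ≤ (H.edist (φ u) (φ v) : ℝ≥0∞)) ∧
  (∀ u v : V, (H.edist (φ u) (φ v) : ℝ≥0∞) ≤ q * (G.edist u v : ℝ≥0∞) + q) ∧
  (∀ x : W, ∃ v : V, (H.edist x (φ v) : ℝ≥0∞) ≤ q)

/-- `G` is `q`-quasi-isometric to `H`. -/
def QuasiIsometric {V W : Type} (q : ℕ) (G : SimpleGraph V) (H : SimpleGraph W) : Prop :=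
  ∃ φ : V → W, IsQuasiIsometry q G H φ

/-- `(T, β)` is a `T`-decomposition of `G`: every edge of `G` has both ends in some bag, and
for every vertex `v` of `G` the set of nodes whose bag contains `v` induces a non-empty
connected subgraph of `T`. -/
def IsTreeDecomp {X V : Type} (T : SimpleGraph X) (G : SimpleGraph V) (β : X → Set V) : Prop :=
  (∀ ⦃u v : V⦄, G.Adj u v → ∃ x : X, u ∈ β x ∧ v ∈ β x) ∧
  (∀ v : V, (T.induce {x : X | v ∈ β x}).Connected)

/-- `(L, β)` is an `L`-decomposition of `G` over the line (linearly ordered set) `L`: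
every edge of `G` has both ends in some bag, and for every vertex `v` of `G` the set of
points of `L` whose bag contains `v` is a non-empty interval of `L`. -/
def IsLineDecomp {L V : Type} [LinearOrder L] (G : SimpleGraph V) (β : L → Set V) : Prop :=
  (∀ ⦃u v : V⦄, G.Adj u v → ∃ x : L, u ∈ β x ∧ v ∈ β x) ∧
  (∀ v : V, {x : L | v ∈ β x}.Nonempty ∧ {x : L | v ∈ β x}.OrdConnected)

/-- `S` is `(k,d)`-centred in `G`: `S` can be partitioned into at most `k` sets, each of
weak diameter at most `d` in `G`. -/
def Centred {V : Type} (G : SimpleGraph V) (k d : ℕ) (S : Set V) : Prop :=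
  ∃ P : Fin k → Set V,
    (⋃ i, P i) = S ∧
    (∀ i j : Fin k, i ≠ j → Disjoint (P i) (P j)) ∧
    (∀ i : Fin k, ∀ u ∈ P i, ∀ v ∈ P i, G.edist u v ≤ (d : ℕ∞))

/-- The independence number of the subgraph of `G` induced by `S` is at most `k`. -/
def IndepAtMost {V : Type} (G : SimpleGraph V) (S : Set V) (k : ℕ) : Prop :=
  ∀ I ⊆ S, (∀ u ∈ I, ∀ v ∈ I, u ≠ v → ¬ G.Adj u v) → I.encard ≤ (k : ℕ∞)

/-- The domination number of the subgraph of `G` induced by `S` is at most `k`. -/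
def DomAtMost {V : Type} (G : SimpleGraph V) (S : Set V) (k : ℕ) : Prop :=
  ∃ D ⊆ S, D.encard ≤ (k : ℕ∞) ∧ ∀ v ∈ S, v ∉ D → ∃ u ∈ D, G.Adj v u

/-- `P` is a partition of the graph `G`: a collection of non-empty vertex sets, each inducing
a connected subgraph of `G`, such that every vertex lies in exactly one part. -/
def IsGraphPartition {V : Type} (G : SimpleGraph V) (P : Set (Set V)) : Prop :=
  (∀ A ∈ P, A.Nonempty) ∧
  (∀ A ∈ P, (G.induce A).Connected) ∧
  (∀ v : V, ∃! A, A ∈ P ∧ v ∈ A)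

/-- The quotient graph `G/P`: vertices are the parts of `P`, and distinct parts are adjacent
iff some vertex of one is adjacent in `G` to some vertex of the other. -/
def quotientGraph {V : Type} (G : SimpleGraph V) (P : Set (Set V)) : SimpleGraph P where
  Adj A B := A ≠ B ∧ ∃ a ∈ (A : Set V), ∃ b ∈ (B : Set V), G.Adj a b
  symm := ⟨by
    rintro A B ⟨hne, a, ha, b, hb, hab⟩
    exact ⟨hne.symm, b, hb, a, ha, hab.symm⟩⟩
  loopless := ⟨by rintro A ⟨hne, -⟩; exact hne rfl⟩

/-- `sim_G(A) ≤ k`: every induced matching of `G` between `A` and its complement has at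
most `k` edges. -/
def SimAtMost {V : Type} (G : SimpleGraph V) (A : Set V) (k : ℕ) : Prop :=
  ∀ (m : ℕ) (a b : Fin m → V),
    Function.Injective a → Function.Injective b →
    (∀ i, a i ∈ A) → (∀ i, b i ∉ A) →
    (∀ i, G.Adj (a i) (b i)) →
    (∀ i j : Fin m, i ≠ j →
      ¬ G.Adj (a i) (a j) ∧ ¬ G.Adj (b i) (b j) ∧ ¬ G.Adj (a i) (b j)) →
    m ≤ k

/-- `G` has sim-width at most `k`: there is a branch-decomposition `(T, L)` — a subcubic
tree `T` together with a map `L` from the vertices of `G` to the leaves of `T` — such that,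
for every edge `ab` of `T`, the side of the associated vertex partition consisting of the
vertices mapped to the component of `T − ab` containing `a` satisfies `sim_G ≤ k`. -/
def SimWidthAtMost {V : Type} (G : SimpleGraph V) (k : ℕ) : Prop :=
  ∃ (X : Type) (T : SimpleGraph X) (L : V → X),
    T.IsTree ∧
    (∀ x : X, (T.neighborSet x).encard ≤ 3) ∧
    (∀ v : V, (T.neighborSet (L v)).encard = 1) ∧
    (∀ a b : X, T.Adj a b →
      SimAtMost G {v : V | (T.deleteEdges {s(a, b)}).Reachable (L v) a} k)


/-! Pull the decomposition of `H` back along the quasi-isometry `φ`: the new bag at `x` consists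
of the vertices `v` with `φ v` within distance `c` of `β x`. The images of the ends of an edge of
`G` are at distance at most `2c`, so a midpoint between them lies in a bag containing both ends.
The nodes whose bag contains `v` are those whose bag meets the `c`-ball around `φ v`; the ball is
connected, so this is a union of pairwise linked subtrees, hence a subtree. Each new bag is covered
by the at most `k + 1` preimages of the `c`-balls around the points of `β x`, and two vertices of
one of them have images at distance at most `2c`, hence distance at most `c (2c + c) = 3c²`. -/

namespace SimpleGraph

variable {V : Type*} {G : SimpleGraph V}

lemma exists_edist_le_edist_le_of_edist_le_add {u v : V} {m n : ℕ}
    (h : G.edist u v ≤ m + n) : ∃ w, G.edist u w ≤ m ∧ G.edist w v ≤ n := by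
  have hfin : G.edist u v ≠ ⊤ := ne_top_of_le_ne_top (by simp) h
  obtain ⟨p, hp⟩ := exists_walk_of_edist_ne_top hfin
  have hlen : p.length ≤ m + n := by exact_mod_cast hp ▸ h
  refine ⟨p.getVert m, (edist_le (p.take m)).trans ?_, (edist_le (p.drop m)).trans ?_⟩
  · simp only [Walk.take_length, Nat.cast_le]
    exact min_le_left _ _
  · simp only [Walk.drop_length, Nat.cast_le]
    omega

lemma connected_induce_setOf_edist_le (c : V) (r : ℕ) :
    (G.induce {v | G.edist c v ≤ r}).Connected := by
  classical
  refine induce_connected_of_patches c (by simp) fun {v} hv => ?_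
  obtain ⟨p, hp⟩ := exists_walk_of_edist_ne_top (ne_top_of_le_ne_top (by simp) hv)
  have hsupp : {x | x ∈ p.support} ⊆ {v | G.edist c v ≤ r} := fun x hx =>
    calc G.edist c x ≤ (p.takeUntil x hx).length := edist_le _
      _ ≤ p.length := by exact_mod_cast p.length_takeUntil_le_length hx
      _ ≤ r := hp ▸ hv
  exact ⟨_, hsupp, p.start_mem_support, p.end_mem_support,
    p.connected_induce_support.preconnected _ _⟩

end SimpleGraph

namespace IsTreeDecomp

variable {X W : Type} {T : SimpleGraph X} {H : SimpleGraph W} {β : X → Set W}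

lemma reachable_induce_of_mem_of_mem (hβ : IsTreeDecomp T H β) {Y : Set X} {w : W}
    (hY : {x | w ∈ β x} ⊆ Y) {x x' : X} (hx : w ∈ β x) (hx' : w ∈ β x') :
    (T.induce Y).Reachable ⟨x, hY hx⟩ ⟨x', hY hx'⟩ :=
  ((hβ.2 w).preconnected ⟨x, hx⟩ ⟨x', hx'⟩).map (T.induceHomOfLE hY).toHom

lemma connected_induce_setOf_exists_mem (hβ : IsTreeDecomp T H β) {U : Set W}
    (hU : (H.induce U).Connected) : (T.induce {x | ∃ w ∈ U, w ∈ β x}).Connected := by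
  set Y := {x | ∃ w ∈ U, w ∈ β x}
  have hsub {w : W} (hw : w ∈ U) : {x | w ∈ β x} ⊆ Y := fun x hx => ⟨w, hw, hx⟩
  have key {a b : U} (p : (H.induce U).Walk a b) {x x' : X} (hx : (a : W) ∈ β x)
      (hx' : (b : W) ∈ β x') : (T.induce Y).Reachable ⟨x, hsub a.2 hx⟩ ⟨x', hsub b.2 hx'⟩ := by
    induction p generalizing x with
    | nil => exact hβ.reachable_induce_of_mem_of_mem (hsub (Subtype.prop _)) hx hx'
    | @cons a a' b hadj q ih =>
      obtain ⟨y, hay, ha'y⟩ := hβ.1 hadj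
      exact (hβ.reachable_induce_of_mem_of_mem (hsub a.2) hx hay).trans (ih ha'y hx')
  obtain ⟨⟨w₀, hw₀⟩⟩ := hU.nonempty
  obtain ⟨⟨x₀, hx₀⟩⟩ := (hβ.2 w₀).nonempty
  refine (connected_iff_exists_forall_reachable _).2 ⟨⟨x₀, hsub hw₀ hx₀⟩, ?_⟩
  rintro ⟨x, w, hw, hx⟩
  exact key (hU.preconnected ⟨w₀, hw₀⟩ ⟨w, hw⟩).some hx₀ hx

end IsTreeDecomp

def comapThickening {X V W : Type} (H : SimpleGraph W) (φ : V → W) (β : X → Set W) (r : ℕ) :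
    X → Set V :=
  fun x => {v | ∃ w, H.edist (φ v) w ≤ r ∧ w ∈ β x}

lemma IsTreeDecomp.comapThickening {X V W : Type} {T : SimpleGraph X} {G : SimpleGraph V}
    {H : SimpleGraph W} {β : X → Set W} (hβ : IsTreeDecomp T H β) {φ : V → W} {r : ℕ}
    (hφ : ∀ ⦃u v : V⦄, G.Adj u v → H.edist (φ u) (φ v) ≤ 2 * r) :
    IsTreeDecomp T G (comapThickening H φ β r) := by
  refine ⟨fun u v huv => ?_, fun v => ?_⟩
  · obtain ⟨w, huw, hwv⟩ :=
      exists_edist_le_edist_le_of_edist_le_add ((hφ huv).trans_eq (two_mul (r : ℕ∞)))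
    obtain ⟨⟨x, hx⟩⟩ := (hβ.2 w).nonempty
    exact ⟨x, ⟨w, huw, hx⟩, ⟨w, edist_comm.trans_le hwv, hx⟩⟩
  · exact hβ.connected_induce_setOf_exists_mem (connected_induce_setOf_edist_le (φ v) r)

namespace IsQuasiIsometry

variable {V W : Type} {q : ℕ} {G : SimpleGraph V} {H : SimpleGraph W} {φ : V → W}

lemma edist_le_of_adj (hφ : IsQuasiIsometry q G H φ) {u v : V} (huv : G.Adj u v) :
    H.edist (φ u) (φ v) ≤ 2 * q := by
  have h := hφ.2.1 u v
  rw [edist_eq_one_iff_adj.2 huv, ENat.toENNReal_one, mul_one, ← two_mul] at h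
  exact_mod_cast h

lemma edist_le_of_edist_map_le (hφ : IsQuasiIsometry q G H φ) {u v : V} {r : ℕ}
    (h : H.edist (φ u) (φ v) ≤ r) : G.edist u v ≤ q * (r + q) := by
  have hdiv : (G.edist u v : ℝ≥0∞) / q ≤ r + q :=
    tsub_le_iff_right.1 ((hφ.1 u v).trans (by exact_mod_cast h))
  rcases eq_or_ne q 0 with rfl | hq
  -- `x / 0 = ⊤` in `ℝ≥0∞` unless `x = 0`, so for `q = 0` the bound forces `G.edist u v = 0`.
  · suffices (G.edist u v : ℝ≥0∞) = 0 by simpa using this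
    by_contra h0
    simp [ENNReal.div_zero h0] at hdiv
  · have := (ENNReal.div_le_iff (by exact_mod_cast hq) (by simp)).1 hdiv
    rw [mul_comm] at this
    exact_mod_cast this

end IsQuasiIsometry

lemma centred_of_subset_biUnion {V ι : Type} {G : SimpleGraph V} {k d : ℕ} {S : Set V}
    {B : Set ι} {A : ι → Set V} (hB : B.encard ≤ k) (hS : S ⊆ ⋃ i ∈ B, A i)
    (hA : ∀ i ∈ B, ∀ u ∈ A i, ∀ v ∈ A i, G.edist u v ≤ d) : Centred G k d S := by
  obtain ⟨ι⟩ : Nonempty (B ↪ Fin k) := by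
    rw [← Cardinal.le_def, Cardinal.mk_fin]
    exact Cardinal.toENat_le_natCast.1 hB
  have hcover (v : V) (hv : v ∈ S) : ∃ i : B, v ∈ A i := by
    simpa using hS hv
  choose σ hσ using hcover
  refine ⟨fun j => {v | ∃ hv : v ∈ S, ι (σ v hv) = j}, ?_, ?_, ?_⟩
  · ext v
    simp
  · intro j j' hjj'
    rw [Set.disjoint_left]
    rintro v ⟨hv, rfl⟩ ⟨_, h⟩
    exact hjj' h
  · rintro j u ⟨hu, hj⟩ v ⟨hv, rfl⟩
    have hσ_eq : σ u hu = σ v hv := ι.injective hj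
    exact hA _ (σ v hv).2 u (hσ_eq ▸ hσ u hu) v (hσ v hv)

theorem centredTDecomp_of_quasiIsometric_general
    (c k : ℕ) (X V W : Type) (T : SimpleGraph X)
    (G : SimpleGraph V) (H : SimpleGraph W) (β : X → Set W)
    (hdec : IsTreeDecomp T H β) (hwidth : ∀ x : X, (β x).encard ≤ ((k + 1 : ℕ) : ℕ∞))
    (hQI : QuasiIsometric c G H) :
    ∃ β' : X → Set V,
      IsTreeDecomp T G β' ∧ ∀ x : X, Centred G (k + 1) (3 * c ^ 2) (β' x) := by
  obtain ⟨φ, hφ⟩ := hQI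
  refine ⟨comapThickening H φ β c, hdec.comapThickening fun u v => hφ.edist_le_of_adj,
    fun x => centred_of_subset_biUnion (hwidth x) (A := fun w => {v | H.edist (φ v) w ≤ c})
      (fun v ⟨w, hvw, hw⟩ => Set.mem_biUnion hw hvw) ?_⟩
  rintro w - u hu v hv
  have huv : H.edist (φ u) (φ v) ≤ (2 * c : ℕ) :=
    calc H.edist (φ u) (φ v) ≤ H.edist (φ u) w + H.edist w (φ v) := H.edist_triangle
      _ ≤ c + c := add_le_add hu (edist_comm.trans_le hv)
      _ = (2 * c : ℕ) := by push_cast; ring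
  calc G.edist u v ≤ c * ((2 * c : ℕ) + c) := hφ.edist_le_of_edist_map_le huv
    _ = (3 * c ^ 2 : ℕ) := by push_cast; ring

/-- For every `c, k ∈ ℕ` and every tree `T`, if a (possibly infinite) graph
`G` is `c`-quasi-isometric to a graph `H` that has a `T`-decomposition of width at most `k`,
then `G` has a `(k+1, 3c²)`-centred `T`-decomposition. -/
theorem centredTDecomp_of_quasiIsometric
    (c k : ℕ) (X V W : Type) (T : SimpleGraph X) (hT : T.IsTree)
    (G : SimpleGraph V) (H : SimpleGraph W) (β : X → Set W)
    (hdec : IsTreeDecomp T H β) (hwidth : ∀ x : X, (β x).encard ≤ ((k + 1 : ℕ) : ℕ∞))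
    (hQI : QuasiIsometric c G H) :
    ∃ β' : X → Set V,
      IsTreeDecomp T G β' ∧ ∀ x : X, Centred G (k + 1) (3 * c ^ 2) (β' x) :=
  centredTDecomp_of_quasiIsometric_general c k X V W T G H β hdec hwidth hQI
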